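/- Let G be a finite group of odd order such that every element of its commutator subgroup can be written as a product of two commutators, i.e., for every x in the commutator subgroup there exist a, b, c, d in G with x = [a,b]·[c,d]. Then the K-set of G coincides with (the underlying set of) its commutator subgroup. -/

import Mathlib

/-!
Odd order is used through the bijectivity of `g ↦ g ^ 2`: no element other than `1` is its own
inverse, and `x ^ 2 ∈ H` forces `x ∈ H`. The non-identity elements therefore split into pairs
`{g, g⁻¹}`, so the image of any K-set element `x` in the abelianization is its own inverse, and
`x ∈ G'`. Conversely, any repetition-free word of non-identity elements closed under inversion
extends, by appending the remaining pairs `g, g⁻¹`, to a word in all non-identity elements with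
the same product. For `⁅a, b⁆ = a b a⁻¹ b⁻¹` the letters are already distinct once `a, b` do not
commute. For `⁅a, b⁆ * ⁅c, d⁆` write `c = u (u⁻¹ c)` and `d = v (v⁻¹ d)` with fresh `u, v`: the
word `a b a⁻¹ b⁻¹ · u (u⁻¹ c) v (v⁻¹ d) (u⁻¹ c)⁻¹ u⁻¹ (v⁻¹ d)⁻¹ v⁻¹` has twelve distinct letters
as soon as `u` and `v` avoid at most 11 and 19 elements respectively, and a nonabelian group of
odd order has at least 21 elements (groups of order `p`, `p ^ 2` and `15` are abelian).
-/

/-- The K-set of a group `G`: the set of all elements expressible as a product,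
taken in some order, of all the non-identity elements of `G`, each occurring
exactly once. -/
def KSet (G : Type*) [Group G] : Set G :=
  {x | ∃ l : List G, l.Nodup ∧ (∀ g : G, g ∈ l ↔ g ≠ 1) ∧ l.prod = x}

open scoped commutatorElement

theorem List.exists_notMem_of_length_lt {α : Type*} [Finite α] (l : List α)
    (h : l.length < Nat.card α) : ∃ x, x ∉ l := by
  classical
  have := Fintype.ofFinite α
  by_contra! hl
  have : (Finset.univ : Finset α) ⊆ l.toFinset := fun x _ => List.mem_toFinset.mpr (hl x)
  have := (Finset.card_le_card this).trans l.toFinset_card_le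
  rw [Finset.card_univ, ← Nat.card_eq_fintype_card] at this
  omega

section OddOrder

variable {G : Type*} [Group G]

theorem pow_two_bijective_of_odd_card (hG : Odd (Nat.card G)) :
    Function.Bijective (fun g : G => g ^ 2) :=
  (Nat.coprime_two_right.mpr hG).pow_left_bijective

theorem inv_ne_self_of_odd_card (hG : Odd (Nat.card G)) {g : G} (hg : g ≠ 1) : g⁻¹ ≠ g := by
  intro h
  refine hg ((pow_two_bijective_of_odd_card hG).injective ?_)
  calc g ^ 2 = g⁻¹ * g := by rw [pow_two, h]
    _ = 1 ^ 2 := by rw [inv_mul_cancel, one_pow]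

theorem mem_of_pow_two_mem (hG : Odd (Nat.card G)) {H : Subgroup G} {x : G} (hx : x ^ 2 ∈ H) :
    x ∈ H := by
  have hco := Nat.coprime_two_right.mpr hG
  rw [← (powCoprime hco).symm_apply_apply x, powCoprime_symm_apply]
  exact zpow_mem hx _

end OddOrder

section Words

variable {G : Type*} [Group G]

def withInv (l : List G) : List G := l ++ l.map (·⁻¹)

theorem mem_withInv_cons {x y : G} {l : List G} :
    y ∈ withInv (x :: l) ↔ y = x ∨ y = x⁻¹ ∨ y ∈ withInv l := by
  simp only [withInv, List.map_cons, List.cons_append, List.mem_cons, List.mem_append]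
  tauto

theorem inv_mem_withInv {x : G} {l : List G} : x⁻¹ ∈ withInv l ↔ x ∈ withInv l := by
  simp only [withInv, List.mem_append, List.mem_map, inv_eq_iff_eq_inv, exists_eq_right, inv_inv]
  tauto

theorem nodup_withInv_cons {x : G} {l : List G} :
    (withInv (x :: l)).Nodup ↔ x⁻¹ ≠ x ∧ x ∉ withInv l ∧ (withInv l).Nodup := by
  have hperm : (withInv (x :: l)).Perm (x :: x⁻¹ :: withInv l) := by
    simp [withInv]
  rw [hperm.nodup_iff, List.nodup_cons, List.nodup_cons, List.mem_cons, inv_mem_withInv]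
  constructor
  · rintro ⟨hx, -, hl⟩
    exact ⟨fun h => hx (Or.inl h.symm), fun h => hx (Or.inr h), hl⟩
  · rintro ⟨hx, hxl, hl⟩
    exact ⟨fun h => h.elim (fun h => hx h.symm) hxl, hxl, hl⟩

theorem exists_list_nodup_toFinset_eq_prod_eq_one [DecidableEq G] (s : Finset G)
    (hs : ∀ g ∈ s, g⁻¹ ∈ s) (hs' : ∀ g ∈ s, g⁻¹ ≠ g) :
    ∃ l : List G, l.Nodup ∧ l.toFinset = s ∧ l.prod = 1 := by
  induction s using Finset.strongInduction with
  | H s ih =>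
    rcases s.eq_empty_or_nonempty with rfl | ⟨g, hg⟩
    · exact ⟨[], List.nodup_nil, rfl, rfl⟩
    have hgi : g⁻¹ ≠ g := hs' g hg
    obtain ⟨l, hl, hls, hl1⟩ := ih ((s.erase g).erase g⁻¹)
      ((Finset.erase_subset _ _).trans_ssubset (Finset.erase_ssubset hg))
      (fun x hx => by
        simp only [Finset.mem_erase, ne_eq, inv_eq_iff_eq_inv, inv_inv] at hx ⊢
        exact ⟨hx.2.1, hx.1, hs x hx.2.2⟩)
      (fun x hx => hs' x (Finset.mem_of_mem_erase (Finset.mem_of_mem_erase hx)))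
    have hmem : ∀ x, x ∈ l ↔ x ≠ g⁻¹ ∧ x ≠ g ∧ x ∈ s := fun x => by
      rw [← List.mem_toFinset, hls, Finset.mem_erase, Finset.mem_erase]
    refine ⟨g :: g⁻¹ :: l, ?_, ?_, by simp [hl1]⟩
    · simp only [List.nodup_cons, List.mem_cons, hmem]
      have := hgi.symm
      tauto
    · ext x
      simp only [List.mem_toFinset, List.mem_cons, hmem]
      have := hs g hg
      constructor
      · rintro (rfl | rfl | ⟨-, -, hx⟩) <;> assumption
      · tauto

theorem prod_mem_KSet [Finite G] (hG : Odd (Nat.card G)) {w : List G} (hw : w.Nodup)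
    (hw1 : 1 ∉ w) (hinv : ∀ g ∈ w, g⁻¹ ∈ w) : w.prod ∈ KSet G := by
  classical
  have := Fintype.ofFinite G
  obtain ⟨l, hl, hls, hl1⟩ := exists_list_nodup_toFinset_eq_prod_eq_one
    ((Finset.univ.erase 1).filter (· ∉ w))
    (fun g hg => by
      simp only [Finset.mem_filter, Finset.mem_erase, Finset.mem_univ, and_true] at hg ⊢
      exact ⟨inv_ne_one.mpr hg.1, fun h => hg.2 (by simpa using hinv _ h)⟩)
    (fun g hg => inv_ne_self_of_odd_card hG
      (Finset.ne_of_mem_erase (Finset.mem_of_mem_filter _ hg)))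
  have hmem : ∀ g, g ∈ l ↔ g ≠ 1 ∧ g ∉ w := fun g => by
    simp [← List.mem_toFinset, hls]
  refine ⟨w ++ l, List.nodup_append.mpr ⟨hw, hl, ?_⟩, fun g => ?_, by simp [hl1]⟩
  · rintro a ha b hb rfl
    exact ((hmem a).mp hb).2 ha
  · rw [List.mem_append, hmem]
    by_cases hg : g ∈ w
    · exact ⟨fun _ => ne_of_mem_of_not_mem hg hw1, fun _ => Or.inl hg⟩
    · simp [hg]

theorem one_notMem_withInv {l : List G} (hl : (withInv l).Nodup) : (1 : G) ∉ withInv l := by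
  intro h
  have h1 : (1 : G) ∈ l := by simpa [withInv] using h
  exact (List.nodup_append.mp hl).2.2 1 h1 1 (by simpa using h1) rfl

theorem prod_mem_KSet_of_perm_withInv [Finite G] (hG : Odd (Nat.card G)) {l w : List G}
    (hl : (withInv l).Nodup) (hw : w.Perm (withInv l)) : w.prod ∈ KSet G := by
  refine prod_mem_KSet hG (hw.nodup_iff.mpr hl) ?_ ?_
  · exact fun h => one_notMem_withInv hl (hw.mem_iff.mp h)
  · intro g hg
    rw [hw.mem_iff] at hg ⊢
    exact inv_mem_withInv.mpr hg

end Words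

section SmallOrder

variable {G : Type*} [Group G] [Finite G]

theorem Sylow.card_eq_of_card_eq_prime_mul {p q : ℕ} [Fact p.Prime] (hq : q.Prime) (hpq : p ≠ q)
    (hG : Nat.card G = p * q) (P : Sylow p G) : Nat.card P = p := by
  have hp : p.Prime := Fact.out
  rw [P.card_eq_multiplicity, hG, Nat.factorization_mul hp.ne_zero hq.ne_zero,
    Finsupp.add_apply, hp.factorization_self,
    Nat.factorization_eq_zero_of_not_dvd ((Nat.prime_dvd_prime_iff_eq hp hq).not.mpr hpq),
    add_zero, pow_one]

theorem Sylow.index_eq_of_card_eq_prime_mul {p q : ℕ} [Fact p.Prime] (hq : q.Prime) (hpq : p ≠ q)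
    (hG : Nat.card G = p * q) (P : Sylow p G) : (P : Subgroup G).index = q := by
  have := (P : Subgroup G).card_mul_index
  rw [P.card_eq_of_card_eq_prime_mul hq hpq hG, hG] at this
  exact Nat.eq_of_mul_eq_mul_left (Fact.out : p.Prime).pos this

theorem Sylow.normal_of_card_eq_prime_mul {p q : ℕ} [Fact p.Prime] (hq : q.Prime) (hpq : p ≠ q)
    (hq_mod : ¬ q ≡ 1 [MOD p]) (hG : Nat.card G = p * q) (P : Sylow p G) :
    (P : Subgroup G).Normal := by
  have hone : Nat.card (Sylow p G) = 1 := by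
    rcases (Nat.dvd_prime hq).mp (P.index_eq_of_card_eq_prime_mul hq hpq hG ▸ P.card_dvd_index)
      with h | h
    · exact h
    · exact absurd (h ▸ card_sylow_modEq_one p G) hq_mod
  have := (Nat.card_eq_one_iff_unique.mp hone).1
  exact P.normal_of_subsingleton

theorem commutator_le_sylow_of_card_eq_prime_mul {p q : ℕ} [Fact p.Prime] (hq : q.Prime)
    (hpq : p ≠ q) (hq_mod : ¬ q ≡ 1 [MOD p]) (hG : Nat.card G = p * q) (P : Sylow p G) :
    commutator G ≤ P := by
  have := P.normal_of_card_eq_prime_mul hq hpq hq_mod hG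
  have : Fact q.Prime := ⟨hq⟩
  have : IsCyclic (G ⧸ (P : Subgroup G)) := isCyclic_of_prime_card
    ((Subgroup.index_eq_card _).symm.trans (P.index_eq_of_card_eq_prime_mul hq hpq hG))
  exact Subgroup.Normal.quotient_commutative_iff_commutator_le.mp inferInstance

theorem isMulCommutative_of_card_eq_prime_mul {p q : ℕ} (hp : p.Prime) (hq : q.Prime)
    (hpq : p ≠ q) (hq_mod : ¬ q ≡ 1 [MOD p]) (hp_mod : ¬ p ≡ 1 [MOD q])
    (hG : Nat.card G = p * q) : IsMulCommutative G := by
  have : Fact p.Prime := ⟨hp⟩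
  have : Fact q.Prime := ⟨hq⟩
  obtain ⟨P⟩ : Nonempty (Sylow p G) := inferInstance
  obtain ⟨Q⟩ : Nonempty (Sylow q G) := inferInstance
  refine isMulCommutative_iff.mpr fun a b => commutatorElement_eq_one_iff_mul_comm.mp ?_
  have hab : ⁅a, b⁆ ∈ commutator G := Subgroup.commutator_mem_commutator trivial trivial
  have hP := commutator_le_sylow_of_card_eq_prime_mul hq hpq hq_mod hG P hab
  have hQ := commutator_le_sylow_of_card_eq_prime_mul hp hpq.symm hp_mod (mul_comm p q ▸ hG) Q hab
  rw [← orderOf_eq_one_iff]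
  exact Nat.eq_one_of_dvd_coprimes ((Nat.coprime_primes hp hq).mpr hpq)
    (P.card_eq_of_card_eq_prime_mul hq hpq hG ▸ Subgroup.orderOf_dvd_natCard _ hP)
    (Q.card_eq_of_card_eq_prime_mul hp hpq.symm (mul_comm p q ▸ hG) ▸
      Subgroup.orderOf_dvd_natCard _ hQ)

theorem isMulCommutative_of_odd_card_lt (hG : Odd (Nat.card G)) (hlt : Nat.card G < 21) :
    IsMulCommutative G := by
  have hcases : (∃ p, p.Prime ∧ Nat.card G ∣ p) ∨ Nat.card G = 3 ^ 2 ∨ Nat.card G = 3 * 5 := by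
    obtain ⟨k, hk⟩ := hG
    rw [hk] at hlt ⊢
    have : k < 10 := by omega
    interval_cases k
    all_goals first
      | exact Or.inr (Or.inl rfl)
      | exact Or.inr (Or.inr rfl)
      | exact Or.inl ⟨2, Nat.prime_two, one_dvd _⟩
      | exact Or.inl ⟨_, by norm_num, dvd_rfl⟩
  rcases hcases with ⟨p, hp, hdvd⟩ | h9 | h15
  · have : Fact p.Prime := ⟨hp⟩
    have := isCyclic_of_card_dvd_prime hdvd
    infer_instance
  · have : Fact (Nat.Prime 3) := ⟨Nat.prime_three⟩
    exact IsPGroup.isMulCommutative_of_card_eq_prime_sq h9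
  · exact isMulCommutative_of_card_eq_prime_mul Nat.prime_three (by norm_num) (by norm_num)
      (by decide) (by decide) h15

end SmallOrder

section Commutators

variable {G : Type*} [Group G]

theorem exists_nodup_withInv_cons_cons [Finite G] (hG : Odd (Nat.card G)) {l : List G}
    (hl : (withInv l).Nodup) {c : G} (hc : c ≠ 1) (hcard : 4 * l.length + 3 < Nat.card G) :
    ∃ x : G, (withInv (x :: x⁻¹ * c :: l)).Nodup := by
  obtain ⟨r, hr⟩ := (pow_two_bijective_of_odd_card hG).surjective c
  -- `r` is the only `x` with `x = x⁻¹ * c`, and `x⁻¹ * c = m` iff `x = c * m⁻¹`.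
  obtain ⟨x, hx⟩ := List.exists_notMem_of_length_lt
    (1 :: c :: r :: (withInv l ++ (withInv l).map (c * ·⁻¹))) (by simp [withInv]; omega)
  simp only [List.mem_cons, List.mem_append, List.mem_map, not_or] at hx
  obtain ⟨hx1, hxc, hxr, hxl, hxcl⟩ := hx
  have hy1 : x⁻¹ * c ≠ 1 := fun h => hxc (inv_mul_eq_one.mp h)
  refine ⟨x, nodup_withInv_cons.mpr ⟨inv_ne_self_of_odd_card hG hx1, ?_,
    nodup_withInv_cons.mpr ⟨inv_ne_self_of_odd_card hG hy1, ?_, hl⟩⟩⟩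
  · simp only [mem_withInv_cons, not_or]
    refine ⟨fun h => hxr ((pow_two_bijective_of_odd_card hG).injective ?_), ?_, hxl⟩
    · simp only [hr, pow_two]
      nth_rewrite 2 [h]
      group
    · intro h
      apply hc
      simpa using congrArg (x * ·) h
  · exact fun h => hxcl ⟨_, h, by group⟩

theorem nodup_withInv_pair (hG : Odd (Nat.card G)) {a b : G} (hab : a * b ≠ b * a) :
    (withInv [a, b]).Nodup := by
  have ha : a ≠ 1 := by rintro rfl; simp at hab
  have hb : b ≠ 1 := by rintro rfl; simp at hab
  refine nodup_withInv_cons.mpr ⟨inv_ne_self_of_odd_card hG ha, ?_,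
    nodup_withInv_cons.mpr ⟨inv_ne_self_of_odd_card hG hb, by simp [withInv], by simp [withInv]⟩⟩
  simp only [mem_withInv_cons, not_or]
  refine ⟨by rintro rfl; exact hab rfl, by rintro rfl; simp at hab, by simp [withInv]⟩

theorem commutatorElement_mem_KSet [Finite G] (hG : Odd (Nat.card G)) (a b : G) :
    ⁅a, b⁆ ∈ KSet G := by
  by_cases hab : a * b = b * a
  · rw [commutatorElement_eq_one_iff_mul_comm.mpr hab]
    simpa [withInv] using
      prod_mem_KSet_of_perm_withInv hG (l := []) List.nodup_nil (List.Perm.refl _)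
  · have := prod_mem_KSet_of_perm_withInv hG (nodup_withInv_pair hG hab) (List.Perm.refl _)
    simpa [withInv, commutatorElement_def, mul_assoc] using this

theorem commutatorElement_mul_commutatorElement_mem_KSet [Finite G] (hG : Odd (Nat.card G))
    (a b c d : G) : ⁅a, b⁆ * ⁅c, d⁆ ∈ KSet G := by
  by_cases hab : a * b = b * a
  · simpa [commutatorElement_eq_one_iff_mul_comm.mpr hab] using commutatorElement_mem_KSet hG c d
  by_cases hcd : c * d = d * c
  · simpa [commutatorElement_eq_one_iff_mul_comm.mpr hcd] using commutatorElement_mem_KSet hG a b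
  have hc : c ≠ 1 := by rintro rfl; simp at hcd
  have hd : d ≠ 1 := by rintro rfl; simp at hcd
  have hcard : 19 < Nat.card G := by
    by_contra! h
    have := isMulCommutative_of_odd_card_lt hG (by omega)
    exact hab (mul_comm' a b)
  obtain ⟨u, hu⟩ := exists_nodup_withInv_cons_cons hG (nodup_withInv_pair hG hab) hc
    (by simp; omega)
  obtain ⟨v, hv⟩ := exists_nodup_withInv_cons_cons hG hu hd (by simp; omega)
  have hw := prod_mem_KSet_of_perm_withInv hG hv (w :=
    [a, b, a⁻¹, b⁻¹, u, u⁻¹ * c, v, v⁻¹ * d, (u⁻¹ * c)⁻¹, u⁻¹, (v⁻¹ * d)⁻¹, v⁻¹]) (by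
      classical
      simp only [withInv, List.perm_iff_count, List.count_cons, List.count_nil, List.map_cons,
        List.map_nil, List.cons_append, List.nil_append]
      intro x
      omega)
  simpa [commutatorElement_def, mul_assoc] using hw

theorem KSet_subset_commutator (hG : Odd (Nat.card G)) : KSet G ⊆ commutator G := by
  classical
  rintro x ⟨l, hl, hmem, rfl⟩
  have hperm : ((l.map (·⁻¹)).map (Abelianization.of (G := G))).Perm (l.map Abelianization.of) :=
    (List.perm_of_nodup_nodup_toFinset_eq (hl.map inv_injective) hl
      (by ext g; simp [hmem, inv_eq_iff_eq_inv])).map _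
  have hinv : (Abelianization.of l.prod)⁻¹ = Abelianization.of l.prod := by
    rw [map_list_prod, List.prod_inv, ← hperm.prod_eq, List.map_map, List.map_map]
    simp only [Function.comp_def, map_inv]
  refine mem_of_pow_two_mem hG ?_
  rw [← Abelianization.ker_of, MonoidHom.mem_ker, pow_two, map_mul]
  nth_rewrite 1 [← hinv]
  exact inv_mul_cancel _

end Commutators

theorem KSet_eq_commutator_of_two_commutator_products (G : Type*) [Group G] [Fintype G]
    (hG : Odd (Fintype.card G))
    (h : ∀ x ∈ commutator G, ∃ a b c d : G, x = ⁅a, b⁆ * ⁅c, d⁆) :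
    KSet G = (commutator G : Subgroup G) := by
  rw [← Nat.card_eq_fintype_card] at hG
  refine subset_antisymm (KSet_subset_commutator hG) fun x hx => ?_
  obtain ⟨a, b, c, d, rfl⟩ := h x hx
  exact commutatorElement_mul_commutatorElement_mem_KSet hG a b c d
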